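/- In the Closed-form SINR setting, fix P_u > 0 and E_r > 0, and for each M ≥ 1 set the relay power to P_r = E_r/M (with P_u fixed). Then for every index k, SINR_k(M) → E_r·σ_k⁴σ_{k+1}⁴ / Σ_{k'=1}^K σ_{k'-1}²σ_{k'}⁴ as M → ∞, and hence SE_k(M) = ((T−τ)/T)·((K−1)/K)·log₂(1 + SINR_k(M)) converges to ((T−τ)/T)·((K−1)/K)·log₂(1 + E_r·σ_k⁴σ_{k+1}⁴ / Σ_{k'=1}^K σ_{k'-1}²σ_{k'}⁴). (Equation (34) of the paper.) -/
import Mathlib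


open Filter Finset

noncomputable section

/-- The closed-form normalization factor `α⁽¹⁾` of eq. (24) of the paper, as a function of
the number of relay antennas `M`, for estimated-channel variances `σ2` (i.e. `σ_k²`),
large-scale coefficients `β`, user power `Pu` and relay power `Pr`. -/
def alphaCF (K : ℕ) [NeZero K] (σ2 β : ZMod K → ℝ) (Pu Pr : ℝ) (M : ℕ) : ℝ :=
  Pr / ((M : ℝ) ^ 3 * Pu * (∑ k' : ZMod K, σ2 (k' - 1) * (σ2 k') ^ 2)
    + (M : ℝ) ^ 2 * (∑ k' : ZMod K, σ2 k' * σ2 (k' + 1)) * (Pu * (∑ k' : ZMod K, β k') + 1)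
    + (M : ℝ) * Pu * ∑ k' : ZMod K, (σ2 k') ^ 2 * σ2 (k' + 1))

/-- `a_{k,i} = σ_k⁴ σ_{k+1}² β_i + σ_i⁴ σ_{i-1}² β_k`. -/
def aCF (K : ℕ) [NeZero K] (σ2 β : ZMod K → ℝ) (k i : ZMod K) : ℝ :=
  (σ2 k) ^ 2 * σ2 (k + 1) * β i + (σ2 i) ^ 2 * σ2 (i - 1) * β k

/-- `b_{k,i} = β_k β_i Σ_{k'} σ_{k'}² σ_{k'+1}²`. -/
def bCF (K : ℕ) [NeZero K] (σ2 β : ZMod K → ℝ) (k i : ZMod K) : ℝ :=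
  β k * β i * ∑ k' : ZMod K, σ2 k' * σ2 (k' + 1)

/-- `c_{k,i} = σ_k⁴ σ_{k-1}² β_i + σ_i⁴ σ_{i+1}² β_k`. -/
def cCF (K : ℕ) [NeZero K] (σ2 β : ZMod K → ℝ) (k i : ZMod K) : ℝ :=
  (σ2 k) ^ 2 * σ2 (k - 1) * β i + (σ2 i) ^ 2 * σ2 (i + 1) * β k

/-- `V_k(M) = M³ a_{k,k+1} + M² b_{k,k+1} + M c_{k,k+1}` (the beamforming uncertainty
variance of eq. (27)). -/
def Vcf (K : ℕ) [NeZero K] (σ2 β : ZMod K → ℝ) (k : ZMod K) (M : ℕ) : ℝ :=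
  (M : ℝ) ^ 3 * aCF K σ2 β k (k + 1) + (M : ℝ) ^ 2 * bCF K σ2 β k (k + 1)
    + (M : ℝ) * cCF K σ2 β k (k + 1)

/-- The inter-user interference term `IU_k(M)` of eq. (28). -/
def IUcf (K : ℕ) [NeZero K] (σ2 β : ZMod K → ℝ) (Pu Pr : ℝ) (k : ZMod K) (M : ℕ) : ℝ :=
  alphaCF K σ2 β Pu Pr M * Pu * (∑ i ∈ Finset.univ.erase (k + 1),
      ((M : ℝ) ^ 3 * aCF K σ2 β k i + (M : ℝ) ^ 2 * bCF K σ2 β k i + (M : ℝ) * cCF K σ2 β k i))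
  + alphaCF K σ2 β Pu Pr M * Pu * (M : ℝ) ^ 2 * (σ2 (k - 1)) ^ 2 * (σ2 k) ^ 2
  + alphaCF K σ2 β Pu Pr M * Pu * (M : ℝ) *
      (2 * (σ2 k) ^ 3 * σ2 (k + 1) + 2 * (σ2 k) ^ 3 * σ2 (k - 1)
        + (2 * (σ2 k) ^ 2 + (β k) ^ 2 - 2 * β k * σ2 k)
          * ∑ k' : ZMod K, 2 * σ2 k' * σ2 (k' + 1))

/-- The amplified-noise term `AN_k(M)` of eq. (29). -/
def ANcf (K : ℕ) [NeZero K] (σ2 β : ZMod K → ℝ) (Pu Pr : ℝ) (k : ZMod K) (M : ℕ) : ℝ :=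
  alphaCF K σ2 β Pu Pr M * ((M : ℝ) ^ 3 * (σ2 k) ^ 2 * σ2 (k + 1)
    + (M : ℝ) ^ 2 * β k * ∑ k' : ZMod K, σ2 k' * σ2 (k' + 1))

/-- The closed-form SINR of user `k` in the first time slot (Theorem 1 of the paper). -/
def sinrCF (K : ℕ) [NeZero K] (σ2 β : ZMod K → ℝ) (Pu Pr : ℝ) (k : ZMod K) (M : ℕ) : ℝ :=
  alphaCF K σ2 β Pu Pr M * Pu * (M : ℝ) ^ 4 * (σ2 k) ^ 2 * (σ2 (k + 1)) ^ 2
    / (alphaCF K σ2 β Pu Pr M * Pu * Vcf K σ2 β k M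
        + IUcf K σ2 β Pu Pr k M + ANcf K σ2 β Pu Pr k M + 1)


private lemma aCF_nonneg' {K : ℕ} [NeZero K] {σ2 β : ZMod K → ℝ}
    (hσ : ∀ j, 0 ≤ σ2 j) (hβ : ∀ j, 0 ≤ β j) (k i : ZMod K) : 0 ≤ aCF K σ2 β k i := by
  unfold aCF
  have h1 := hσ k; have h2 := hσ (k + 1); have h3 := hσ i; have h4 := hσ (i - 1)
  have h5 := hβ i; have h6 := hβ k
  positivity

private lemma bCF_nonneg' {K : ℕ} [NeZero K] {σ2 β : ZMod K → ℝ}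
    (hσ : ∀ j, 0 ≤ σ2 j) (hβ : ∀ j, 0 ≤ β j) (k i : ZMod K) : 0 ≤ bCF K σ2 β k i := by
  unfold bCF
  exact mul_nonneg (mul_nonneg (hβ k) (hβ i))
    (Finset.sum_nonneg fun j _ => mul_nonneg (hσ j) (hσ _))

private lemma cCF_nonneg' {K : ℕ} [NeZero K] {σ2 β : ZMod K → ℝ}
    (hσ : ∀ j, 0 ≤ σ2 j) (hβ : ∀ j, 0 ≤ β j) (k i : ZMod K) : 0 ≤ cCF K σ2 β k i := by
  unfold cCF
  have h1 := hσ k; have h2 := hσ (k - 1); have h3 := hσ i; have h4 := hσ (i + 1)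
  have h5 := hβ i; have h6 := hβ k
  positivity

set_option maxHeartbeats 1600000

/-- with relay power scaled as `P_r = E_r/M` and fixed user power,
`SINR_k(M) → E_r σ_k⁴ σ_{k+1}⁴ / Σ_{k'} σ_{k'-1}² σ_{k'}⁴` and the spectral efficiency
converges accordingly (eq. (34)). -/
theorem sinr_limit_relay_power_scaling
    (K : ℕ) [NeZero K] (hK : 2 ≤ K)
    (β : ZMod K → ℝ) (hβ : ∀ k, 0 < β k)
    (τ T Pp : ℝ) (hτ : (K : ℝ) ≤ τ) (hT : τ < T) (hPp : 0 < Pp)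
    (σ2 : ZMod K → ℝ) (hσ2 : ∀ k, σ2 k = τ * Pp * (β k) ^ 2 / (τ * Pp * β k + 1))
    (Pu Er : ℝ) (hPu : 0 < Pu) (hEr : 0 < Er) (k : ZMod K) :
    Tendsto (fun M : ℕ => sinrCF K σ2 β Pu (Er / M) k M) atTop
      (nhds (Er * (σ2 k) ^ 2 * (σ2 (k + 1)) ^ 2
        / ∑ k' : ZMod K, σ2 (k' - 1) * (σ2 k') ^ 2)) ∧
    Tendsto (fun M : ℕ => (T - τ) / T * (((K : ℝ) - 1) / K)
        * Real.logb 2 (1 + sinrCF K σ2 β Pu (Er / M) k M)) atTop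
      (nhds ((T - τ) / T * (((K : ℝ) - 1) / K) * Real.logb 2 (1 + Er * (σ2 k) ^ 2
        * (σ2 (k + 1)) ^ 2 / ∑ k' : ZMod K, σ2 (k' - 1) * (σ2 k') ^ 2))) := by
  have hKpos : (0 : ℝ) < K := by
    have : K ≠ 0 := NeZero.ne K
    exact_mod_cast Nat.pos_of_ne_zero this
  have hτ0 : 0 < τ := lt_of_lt_of_le hKpos hτ
  have hσ : ∀ j, 0 < σ2 j := by
    intro j
    have hb := hβ j
    rw [hσ2 j]
    have h1 : 0 < τ * Pp * (β j) ^ 2 := by positivity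
    have h2 : 0 < τ * Pp * β j + 1 := by positivity
    exact div_pos h1 h2
  have hσ' : ∀ j, 0 ≤ σ2 j := fun j => (hσ j).le
  have hβ' : ∀ j, 0 ≤ β j := fun j => (hβ j).le
  classical
  set S1 := ∑ k' : ZMod K, σ2 (k' - 1) * (σ2 k') ^ 2 with hS1def
  set S2 := ∑ k' : ZMod K, σ2 k' * σ2 (k' + 1) with hS2def
  set S3 := ∑ k' : ZMod K, (σ2 k') ^ 2 * σ2 (k' + 1) with hS3def
  set Sβ := ∑ k' : ZMod K, β k' with hSβdef
  set S2' := ∑ k' : ZMod K, 2 * σ2 k' * σ2 (k' + 1) with hS2'def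
  set Sa := ∑ i ∈ Finset.univ.erase (k + 1), aCF K σ2 β k i with hSadef
  set Sb := ∑ i ∈ Finset.univ.erase (k + 1), bCF K σ2 β k i with hSbdef
  set Sc := ∑ i ∈ Finset.univ.erase (k + 1), cCF K σ2 β k i with hScdef
  have hS1pos : 0 < S1 := by
    rw [hS1def]
    exact Finset.sum_pos
      (fun i _ => by have := hσ (i - 1); have := hσ i; positivity) Finset.univ_nonempty
  have hS2pos : 0 < S2 := by
    rw [hS2def]
    exact Finset.sum_pos
      (fun i _ => by have := hσ i; have := hσ (i + 1); positivity) Finset.univ_nonempty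
  have hS3pos : 0 < S3 := by
    rw [hS3def]
    exact Finset.sum_pos
      (fun i _ => by have := hσ i; have := hσ (i + 1); positivity) Finset.univ_nonempty
  have hSβpos : 0 < Sβ := by
    rw [hSβdef]
    exact Finset.sum_pos (fun i _ => hβ i) Finset.univ_nonempty
  have hS2'nn : 0 ≤ S2' := by
    rw [hS2'def]
    exact Finset.sum_nonneg fun i _ => by have := hσ' i; have := hσ' (i + 1); positivity
  have hSann : 0 ≤ Sa := by
    rw [hSadef]; exact Finset.sum_nonneg fun i _ => aCF_nonneg' hσ' hβ' k i
  have hSbnn : 0 ≤ Sb := by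
    rw [hSbdef]; exact Finset.sum_nonneg fun i _ => bCF_nonneg' hσ' hβ' k i
  have hScnn : 0 ≤ Sc := by
    rw [hScdef]; exact Finset.sum_nonneg fun i _ => cCF_nonneg' hσ' hβ' k i
  have haknn := aCF_nonneg' hσ' hβ' k (k + 1)
  have hbknn := bCF_nonneg' hσ' hβ' k (k + 1)
  have hcknn := cCF_nonneg' hσ' hβ' k (k + 1)
  have hq : 0 ≤ 2 * (σ2 k) ^ 2 + (β k) ^ 2 - 2 * β k * σ2 k := by
    nlinarith [sq_nonneg (σ2 k - β k), sq_nonneg (σ2 k)]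
  set B3 := Pu * aCF K σ2 β k (k + 1) + Pu * Sa + (σ2 k) ^ 2 * σ2 (k + 1) with hB3def
  set B2 := Pu * bCF K σ2 β k (k + 1) + Pu * Sb + Pu * (σ2 (k - 1)) ^ 2 * (σ2 k) ^ 2
    + β k * S2 with hB2def
  set B1 := Pu * cCF K σ2 β k (k + 1) + Pu * Sc
    + Pu * (2 * (σ2 k) ^ 3 * σ2 (k + 1) + 2 * (σ2 k) ^ 3 * σ2 (k - 1)
      + (2 * (σ2 k) ^ 2 + (β k) ^ 2 - 2 * β k * σ2 k) * S2') with hB1def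
  set C1 := S2 * (Pu * Sβ + 1) + Er * B3 with hC1def
  set C2 := Pu * S3 + Er * B2 with hC2def
  set C3 := Er * B1 with hC3def
  have hσk := hσ' k
  have hσk1 := hσ' (k + 1)
  have hσkm := hσ' (k - 1)
  have hβk := hβ' k
  have hB3nn : 0 ≤ B3 := by
    rw [hB3def]
    refine add_nonneg (add_nonneg (mul_nonneg hPu.le haknn) (mul_nonneg hPu.le hSann)) ?_
    positivity
  have hB2nn : 0 ≤ B2 := by
    rw [hB2def]
    refine add_nonneg (add_nonneg (add_nonneg (mul_nonneg hPu.le hbknn)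
      (mul_nonneg hPu.le hSbnn)) (by positivity)) (mul_nonneg hβk hS2pos.le)
  have hB1nn : 0 ≤ B1 := by
    rw [hB1def]
    refine add_nonneg (add_nonneg (mul_nonneg hPu.le hcknn) (mul_nonneg hPu.le hScnn)) ?_
    refine mul_nonneg hPu.le (add_nonneg (add_nonneg (by positivity) (by positivity))
      (mul_nonneg hq hS2'nn))
  have hC1nn : 0 ≤ C1 := by
    rw [hC1def]
    refine add_nonneg (mul_nonneg hS2pos.le (by positivity)) (mul_nonneg hEr.le hB3nn)
  have hC2nn : 0 ≤ C2 := by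
    rw [hC2def]
    exact add_nonneg (mul_nonneg hPu.le hS3pos.le) (mul_nonneg hEr.le hB2nn)
  have hC3nn : 0 ≤ C3 := by
    rw [hC3def]; exact mul_nonneg hEr.le hB1nn
  clear_value S1 S2 S3 Sβ S2' Sa Sb Sc B3 B2 B1 C1 C2 C3
  have hkey : ∀ M : ℕ, 1 ≤ M →
      sinrCF K σ2 β Pu (Er / (M : ℝ)) k M
        = Er * Pu * ((σ2 k) ^ 2 * (σ2 (k + 1)) ^ 2)
          / (Pu * S1 + (1 / (M : ℝ)) * C1 + (1 / (M : ℝ)) ^ 2 * C2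
              + (1 / (M : ℝ)) ^ 3 * C3) := by
    intro M hM
    have hM0 : (0 : ℝ) < (M : ℝ) := by exact_mod_cast hM
    have hD : 0 < (M : ℝ) ^ 3 * Pu * S1 + (M : ℝ) ^ 2 * S2 * (Pu * Sβ + 1)
        + (M : ℝ) * Pu * S3 := by
      have h1 : 0 < (M : ℝ) ^ 3 * Pu * S1 := mul_pos (mul_pos (pow_pos hM0 3) hPu) hS1pos
      have h2 : 0 < (M : ℝ) ^ 2 * S2 * (Pu * Sβ + 1) :=
        mul_pos (mul_pos (pow_pos hM0 2) hS2pos) (by positivity)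
      have h3 : 0 < (M : ℝ) * Pu * S3 := mul_pos (mul_pos hM0 hPu) hS3pos
      linarith
    have hα : 0 < alphaCF K σ2 β Pu (Er / (M : ℝ)) M := by
      unfold alphaCF
      rw [← hS1def, ← hS2def, ← hS3def, ← hSβdef]
      exact div_pos (div_pos hEr hM0) hD
    have hVnn : 0 ≤ Vcf K σ2 β k M := by
      unfold Vcf
      refine add_nonneg (add_nonneg ?_ ?_) ?_
      · exact mul_nonneg (by positivity) haknn
      · exact mul_nonneg (by positivity) hbknn
      · exact mul_nonneg hM0.le hcknn
    have hIUnn : 0 ≤ IUcf K σ2 β Pu (Er / (M : ℝ)) k M := by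
      unfold IUcf
      rw [← hS2'def]
      refine add_nonneg (add_nonneg ?_ ?_) ?_
      · refine mul_nonneg (mul_nonneg hα.le hPu.le) (Finset.sum_nonneg fun i _ => ?_)
        have h1 := aCF_nonneg' hσ' hβ' k i
        have h2 := bCF_nonneg' hσ' hβ' k i
        have h3 := cCF_nonneg' hσ' hβ' k i
        refine add_nonneg (add_nonneg (mul_nonneg (by positivity) h1)
          (mul_nonneg (by positivity) h2)) (mul_nonneg hM0.le h3)
      · have := hα.le; positivity
      · refine mul_nonneg (mul_nonneg (mul_nonneg hα.le hPu.le) hM0.le) ?_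
        refine add_nonneg (add_nonneg (by positivity) (by positivity))
          (mul_nonneg hq hS2'nn)
    have hANnn : 0 ≤ ANcf K σ2 β Pu (Er / (M : ℝ)) k M := by
      unfold ANcf
      rw [← hS2def]
      refine mul_nonneg hα.le (add_nonneg (by positivity)
        (mul_nonneg (mul_nonneg (by positivity) hβk) hS2pos.le))
    have hY : 0 < alphaCF K σ2 β Pu (Er / (M : ℝ)) M * Pu * Vcf K σ2 β k M
        + IUcf K σ2 β Pu (Er / (M : ℝ)) k M + ANcf K σ2 β Pu (Er / (M : ℝ)) k M + 1 := by
      have h1 : 0 ≤ alphaCF K σ2 β Pu (Er / (M : ℝ)) M * Pu * Vcf K σ2 β k M :=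
        mul_nonneg (mul_nonneg hα.le hPu.le) hVnn
      linarith
    have hQ : 0 < Pu * S1 + (1 / (M : ℝ)) * C1 + (1 / (M : ℝ)) ^ 2 * C2
        + (1 / (M : ℝ)) ^ 3 * C3 := by
      have h0 : 0 < Pu * S1 := mul_pos hPu hS1pos
      have h1 : 0 ≤ (1 / (M : ℝ)) * C1 := mul_nonneg (by positivity) hC1nn
      have h2 : 0 ≤ (1 / (M : ℝ)) ^ 2 * C2 := mul_nonneg (by positivity) hC2nn
      have h3 : 0 ≤ (1 / (M : ℝ)) ^ 3 * C3 := mul_nonneg (by positivity) hC3nn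
      linarith
    have hsplit : (∑ i ∈ Finset.univ.erase (k + 1),
        ((M : ℝ) ^ 3 * aCF K σ2 β k i + (M : ℝ) ^ 2 * bCF K σ2 β k i
          + (M : ℝ) * cCF K σ2 β k i))
        = (M : ℝ) ^ 3 * Sa + (M : ℝ) ^ 2 * Sb + (M : ℝ) * Sc := by
      rw [Finset.sum_add_distrib, Finset.sum_add_distrib, ← Finset.mul_sum,
        ← Finset.mul_sum, ← Finset.mul_sum, ← hSadef, ← hSbdef, ← hScdef]
    simp only [sinrCF]
    rw [div_eq_div_iff hY.ne' hQ.ne']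
    simp only [alphaCF, IUcf, ANcf, Vcf]
    rw [hsplit]
    rw [← hS1def, ← hS2def, ← hS3def, ← hSβdef, ← hS2'def]
    rw [hC1def, hC2def, hC3def, hB1def, hB2def, hB3def]
    field_simp
    ring
  have h0 : Tendsto (fun M : ℕ => 1 / (M : ℝ)) atTop (nhds 0) :=
    tendsto_one_div_atTop_nhds_zero_nat
  have hPuS1 : (0 : ℝ) < Pu * S1 := mul_pos hPu hS1pos
  have hQlim : Tendsto (fun M : ℕ => Pu * S1 + (1 / (M : ℝ)) * C1
      + (1 / (M : ℝ)) ^ 2 * C2 + (1 / (M : ℝ)) ^ 3 * C3) atTop (nhds (Pu * S1)) := by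
    have h := (((tendsto_const_nhds (x := Pu * S1)).add (h0.mul (tendsto_const_nhds (x := C1)))).add
      ((h0.pow 2).mul (tendsto_const_nhds (x := C2)))).add ((h0.pow 3).mul (tendsto_const_nhds (x := C3)))
    simpa using h
  have hmain : Tendsto (fun M : ℕ => sinrCF K σ2 β Pu (Er / (M : ℝ)) k M) atTop
      (nhds (Er * (σ2 k) ^ 2 * (σ2 (k + 1)) ^ 2 / S1)) := by
    have heq : Er * (σ2 k) ^ 2 * (σ2 (k + 1)) ^ 2 / S1
        = Er * Pu * ((σ2 k) ^ 2 * (σ2 (k + 1)) ^ 2) / (Pu * S1) := by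
      rw [div_eq_div_iff hS1pos.ne' hPuS1.ne']; ring
    rw [heq]
    apply Tendsto.congr' _ (tendsto_const_nhds.div hQlim hPuS1.ne')
    filter_upwards [eventually_ge_atTop 1] with M hM
    exact (hkey M hM).symm
  refine ⟨hmain, ?_⟩
  have hLnn : 0 ≤ Er * (σ2 k) ^ 2 * (σ2 (k + 1)) ^ 2 / S1 :=
    div_nonneg (by positivity) hS1pos.le
  have h1L : (1 : ℝ) + Er * (σ2 k) ^ 2 * (σ2 (k + 1)) ^ 2 / S1 ≠ 0 := by linarith
  have hlog : Tendsto (fun M : ℕ => Real.log (1 + sinrCF K σ2 β Pu (Er / (M : ℝ)) k M))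
      atTop (nhds (Real.log (1 + Er * (σ2 k) ^ 2 * (σ2 (k + 1)) ^ 2 / S1))) :=
    (tendsto_const_nhds.add hmain).log h1L
  simp only [Real.logb]
  exact (hlog.div_const (Real.log 2)).const_mul _
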